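/- Let k > ℓ ≥ 1 and m ≥ s ≥ 0 be integers, and consider the finite hypothesis class H = [k]^s × [ℓ]^{m−s} ⊆ [k]^m (all vectors whose first s coordinates take values in [k] and whose remaining m−s coordinates take values in [ℓ]). Then d^ℓ_DS(H) = s and dens^ℓ(H) = s(1 − ℓ/k). In particular, dens^ℓ(H) → d^ℓ_DS(H) as k → ∞, so the bound dens^ℓ(W) ≤ d^ℓ_DS(W) is tight including the constant. -/

import Mathlib

/-!
The class is the box `∏ᵢ tᵢ` with `tᵢ = [k]` for `i < s` and `tᵢ = [ℓ]` otherwise. In a box each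
edge in direction `i` is a whole fibre of size `|tᵢ|`, so the edges in direction `i` partition the
class into `|W| / |tᵢ|` edges, each contributing `|tᵢ| - ℓ`; summing over `i` gives
`dens^ℓ = Σᵢ (|tᵢ| - ℓ)₊ / |tᵢ| = s (1 - ℓ/k)`.

A sequence `S` that is `ℓ`-DS shattered (`ℓ ≥ 1`) has distinct entries, since every pattern has
a neighbour in every direction, and each coordinate `S j` must carry more than `ℓ` labels, since a
pattern and its `ℓ` neighbours in direction `j` pairwise differ there. Only the first `s`
coordinates qualify, and they are shattered by the full cube `[k]^s`.
-/

open scoped Classical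

section Defs

variable {X Y : Type*}

/-- `f` and `g` are `i`-neighbors: they differ at coordinate `i` and agree elsewhere. -/
def IsNeighbor {n : ℕ} (i : Fin n) (f g : Fin n → Y) : Prop :=
  f i ≠ g i ∧ ∀ j : Fin n, j ≠ i → f j = g j

/-- The restriction `H|_S` of a hypothesis class to a sequence `S`. -/
def restrictClass (H : Set (X → Y)) {d : ℕ} (S : Fin d → X) : Set (Fin d → Y) :=
  (fun h i => h (S i)) '' H

/-- A class `G ⊆ Y^d` is ℓ-DS shattered (as a pattern class). -/
def DSShattered {d : ℕ} (G : Set (Fin d → Y)) (ℓ : ℕ) : Prop :=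
  ∃ F : Finset (Fin d → Y), F.Nonempty ∧ ↑F ⊆ G ∧
    ∀ f ∈ F, ∀ i : Fin d, ℓ ≤ {g : Fin d → Y | g ∈ F ∧ IsNeighbor i f g}.ncard

/-- `H` ℓ-DS shatters the sequence `S`. -/
def DSShatters (H : Set (X → Y)) (ℓ : ℕ) {d : ℕ} (S : Fin d → X) : Prop :=
  DSShattered (restrictClass H S) ℓ

/-- The ℓ-DS dimension of `H` equals `d`. -/
def DSDimEq (H : Set (X → Y)) (ℓ d : ℕ) : Prop :=
  (∃ S : Fin d → X, DSShatters H ℓ S) ∧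
    ∀ d' : ℕ, (∃ S : Fin d' → X, DSShatters H ℓ S) → d' ≤ d

/-- Restriction of `w` to the coordinates other than `i`. -/
def deleteCoord {n : ℕ} (i : Fin n) (w : Fin n → Y) : {j : Fin n // j ≠ i} → Y :=
  fun j => w j.1

/-- The edge `e_{i,a}` of the one-inclusion graph of `W`. -/
noncomputable def edgeFinset {n : ℕ} (W : Finset (Fin n → Y)) (i : Fin n)
    (a : {j : Fin n // j ≠ i} → Y) : Finset (Fin n → Y) :=
  W.filter fun w => deleteCoord i w = a

/-- The set `T_i` of behaviors of `W` on coordinates other than `i`. -/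
noncomputable def behaviors {n : ℕ} (W : Finset (Fin n → Y)) (i : Fin n) :
    Finset ({j : Fin n // j ≠ i} → Y) :=
  W.image (deleteCoord i)

/-- The ℓ-density `dens^ℓ(W) = (1/|W|) Σ_{e ∈ E} (|e| − ℓ)₊` of the one-inclusion graph. -/
noncomputable def dens {n : ℕ} (W : Finset (Fin n → Y)) (ℓ : ℕ) : ℝ :=
  ((∑ i : Fin n, ∑ a ∈ behaviors W i, ((edgeFinset W i a).card - ℓ) : ℕ) : ℝ) / (W.card : ℝ)

/-- The maximum ℓ-density function `μ^ℓ_H(n)`. -/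
noncomputable def maxDensityFn (H : Set (X → Y)) (ℓ n : ℕ) : ℝ :=
  sSup {r : ℝ | ∃ (S : Fin n → X) (F : Finset (Fin n → Y)),
    F.Nonempty ∧ ↑F ⊆ restrictClass H S ∧ r = dens F ℓ}

end Defs

section OneInclusionGraph

open Finset
open Fintype (piFinset mem_piFinset piFinset_nonempty)

variable {Y : Type*} {n : ℕ}

theorem deleteCoord_eq_deleteCoord_iff {i : Fin n} {f g : Fin n → Y} :
    deleteCoord i f = deleteCoord i g ↔ ∀ j, j ≠ i → f j = g j := by
  simp [funext_iff, deleteCoord]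

theorem sum_card_edgeFinset (W : Finset (Fin n → Y)) (i : Fin n) :
    ∑ a ∈ behaviors W i, (edgeFinset W i a).card = W.card := by
  unfold behaviors edgeFinset
  convert (card_eq_sum_card_image (deleteCoord i) W).symm

theorem edgeFinset_piFinset_deleteCoord {t : Fin n → Finset Y} {w : Fin n → Y}
    (hw : w ∈ piFinset t) (i : Fin n) :
    edgeFinset (piFinset t) i (deleteCoord i w) = (t i).image (Function.update w i) := by
  ext g
  simp only [edgeFinset, mem_filter, mem_piFinset, mem_image, deleteCoord_eq_deleteCoord_iff]
  constructor
  · rintro ⟨hg, hgw⟩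
    refine ⟨g i, hg i, funext fun j => ?_⟩
    rcases eq_or_ne j i with rfl | hj
    · simp
    · simp [Function.update_of_ne hj, hgw j hj]
  · rintro ⟨y, hy, rfl⟩
    refine ⟨fun j => ?_, fun j hj => Function.update_of_ne hj _ _⟩
    rcases eq_or_ne j i with rfl | hj
    · simpa using hy
    · simpa [Function.update_of_ne hj] using mem_piFinset.mp hw j

theorem card_edgeFinset_piFinset {t : Fin n → Finset Y} {i : Fin n}
    {a : {j : Fin n // j ≠ i} → Y} (ha : a ∈ behaviors (piFinset t) i) :
    (edgeFinset (piFinset t) i a).card = (t i).card := by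
  obtain ⟨w, hw, rfl⟩ := mem_image.mp ha
  rw [edgeFinset_piFinset_deleteCoord hw, card_image_of_injective _ (Function.update_injective w i)]

theorem dens_piFinset {t : Fin n → Finset Y} (ht : ∀ i, (t i).Nonempty) (ℓ : ℕ) :
    dens (piFinset t) ℓ = ∑ i, (((t i).card - ℓ : ℕ) : ℝ) / (t i).card := by
  rw [_root_.dens, Nat.cast_sum, sum_div]
  refine sum_congr rfl fun i _ => ?_
  have hT : (behaviors (piFinset t) i).card ≠ 0 :=
    (card_pos.mpr ((piFinset_nonempty.mpr ht).image _)).ne'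
  have hW : (piFinset t).card = (behaviors (piFinset t) i).card * (t i).card := by
    rw [← sum_card_edgeFinset _ i, sum_congr rfl fun a ha => card_edgeFinset_piFinset ha,
      sum_const, smul_eq_mul]
  rw [sum_congr rfl fun a ha => by rw [card_edgeFinset_piFinset ha], sum_const, smul_eq_mul, hW]
  push_cast
  exact mul_div_mul_left _ _ (Nat.cast_ne_zero.mpr hT)

end OneInclusionGraph

section DSShattering

open Finset
open Fintype (piFinset mem_piFinset)

variable {X Y : Type*} {d ℓ : ℕ}

theorem DSShattered.mono {G G' : Set (Fin d → Y)} (h : DSShattered G ℓ) (hGG' : G ⊆ G') :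
    DSShattered G' ℓ :=
  let ⟨F, hF, hFG, hnb⟩ := h
  ⟨F, hF, hFG.trans hGG', hnb⟩

theorem ncard_isNeighbor [Fintype Y] (i : Fin d) (f : Fin d → Y) :
    {g | IsNeighbor i f g}.ncard = Fintype.card Y - 1 := by
  have himage : {g | IsNeighbor i f g} = Function.update f i '' {f i}ᶜ := by
    ext g
    simp only [IsNeighbor, Set.mem_ofPred_eq, Set.mem_image, Set.mem_compl_singleton_iff]
    constructor
    · rintro ⟨hi, hj⟩
      refine ⟨g i, Ne.symm hi, funext fun j => ?_⟩
      rcases eq_or_ne j i with rfl | hji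
      · simp
      · rw [Function.update_of_ne hji, hj j hji]
    · rintro ⟨y, hy, rfl⟩
      exact ⟨by simpa using Ne.symm hy, fun j hj => (Function.update_of_ne hj _ _).symm⟩
  rw [himage, Set.ncard_image_of_injective _ (Function.update_injective f i),
    Set.ncard_compl, Set.ncard_singleton, Nat.card_eq_fintype_card]

theorem dsShattered_univ [Fintype Y] [Nonempty Y] (hℓ : ℓ < Fintype.card Y) :
    DSShattered (Set.univ : Set (Fin d → Y)) ℓ := by
  refine ⟨univ, univ_nonempty, Set.subset_univ _, fun f _ i => ?_⟩
  simpa only [mem_univ, true_and, ncard_isNeighbor] using Nat.le_sub_one_of_lt hℓ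

theorem DSShattered.exists_isNeighbor {G : Set (Fin d → Y)} (h : DSShattered G ℓ) (hℓ : 0 < ℓ)
    (i : Fin d) : ∃ f ∈ G, ∃ g ∈ G, IsNeighbor i f g := by
  obtain ⟨F, ⟨f, hf⟩, hFG, hnb⟩ := h
  obtain ⟨g, hg, hfg⟩ := Set.nonempty_of_ncard_ne_zero (hℓ.trans_le (hnb f hf i)).ne'
  exact ⟨f, hFG hf, g, hFG hg, hfg⟩

theorem DSShattered.lt_card {G : Set (Fin d → Y)} (h : DSShattered G ℓ) (i : Fin d)
    {A : Finset Y} (hA : ∀ g ∈ G, g i ∈ A) : ℓ < A.card := by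
  classical
  obtain ⟨F, ⟨f, hf⟩, hFG, hnb⟩ := h
  set N := F.filter (IsNeighbor i f)
  have hN : ℓ ≤ N.card := by
    simpa [N, ← Set.ncard_coe_finset, Set.sep_mem_eq] using hnb f hf i
  have hfN : f ∉ N := fun hmem => (mem_filter.mp hmem).2.1 rfl
  have hagree : ∀ g ∈ insert f N, ∀ j, j ≠ i → g j = f j := by
    intro g hg j hj
    rcases mem_insert.mp hg with rfl | hg
    · rfl
    · exact ((mem_filter.mp hg).2.2 j hj).symm
  calc ℓ < (insert f N).card := by rw [card_insert_of_notMem hfN]; omega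
    _ ≤ A.card := by
      refine card_le_card_of_injOn (· i) (fun g hg => hA g (hFG ?_)) fun g hg g' hg' hgg' => ?_
      · rcases mem_insert.mp hg with rfl | hg
        exacts [hf, (mem_filter.mp hg).1]
      · funext j
        rcases eq_or_ne j i with rfl | hj
        exacts [hgg', (hagree g hg j hj).trans (hagree g' hg' j hj).symm]

theorem DSShatters.injective {H : Set (X → Y)} {S : Fin d → X} (h : DSShatters H ℓ S)
    (hℓ : 0 < ℓ) : Function.Injective S := by
  intro i₁ i₂ hS
  by_contra hne
  obtain ⟨_, ⟨f, -, rfl⟩, _, ⟨g, -, rfl⟩, hi, hj⟩ := h.exists_isNeighbor hℓ i₁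
  exact hi (by simpa [hS] using hj i₂ (Ne.symm hne))

theorem DSShatters.card_le_piFinset {m : ℕ} {t : Fin m → Finset Y}
    {S : Fin d → Fin m} (h : DSShatters (piFinset t : Set (Fin m → Y)) ℓ S) (hℓ : 0 < ℓ) :
    d ≤ #{i | ℓ < (t i).card} := by
  calc d = (univ : Finset (Fin d)).card := (card_fin d).symm
    _ ≤ #{i | ℓ < (t i).card} := by
      refine card_le_card_of_injOn S (fun j _ => mem_filter.mpr ⟨mem_univ _, h.lt_card j ?_⟩)
        (h.injective hℓ).injOn
      rintro _ ⟨w, hw, rfl⟩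
      exact mem_piFinset.mp hw (S j)

end DSShattering

section TruncatedLabels

open Finset
open Fintype (piFinset mem_piFinset)

variable {k ℓ m s : ℕ}

def truncatedLabels (k ℓ m s : ℕ) (i : Fin m) : Finset (Fin k) :=
  univ.filter fun y => s ≤ (i : ℕ) → (y : ℕ) < ℓ

theorem filter_eq_piFinset_truncatedLabels :
    (univ.filter fun w : Fin m → Fin k => ∀ i : Fin m, s ≤ (i : ℕ) → (w i : ℕ) < ℓ) =
      piFinset (truncatedLabels k ℓ m s) := by
  ext w
  simp [truncatedLabels]

theorem card_truncatedLabels (hℓk : ℓ ≤ k) (i : Fin m) :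
    (truncatedLabels k ℓ m s i).card = if s ≤ (i : ℕ) then ℓ else k := by
  split_ifs with hi
  · simp only [truncatedLabels, hi, forall_const]
    rw [Fin.card_filter_val_lt, min_eq_right hℓk]
  · simp [truncatedLabels, hi]

theorem dsShatters_castLE_piFinset_truncatedLabels (hℓ : 0 < ℓ) (hℓk : ℓ < k) (hsm : s ≤ m) :
    DSShatters (piFinset (truncatedLabels k ℓ m s) : Set (Fin m → Fin k)) ℓ (Fin.castLE hsm) := by
  have : Nonempty (Fin k) := ⟨⟨0, by omega⟩⟩
  refine (dsShattered_univ (by simpa using hℓk)).mono fun f _ => ?_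
  refine ⟨fun j => if hj : (j : ℕ) < s then f ⟨j, hj⟩ else ⟨0, by omega⟩, ?_, ?_⟩
  · simp only [mem_coe, mem_piFinset, truncatedLabels, mem_filter, mem_univ, true_and]
    intro j hj
    rwa [dif_neg (by omega)]
  · funext i
    simp

theorem card_filter_lt_card_truncatedLabels (hℓk : ℓ < k) (hsm : s ≤ m) :
    #{i | ℓ < (truncatedLabels k ℓ m s i).card} = s := by
  have hlt (i : Fin m) : ℓ < (truncatedLabels k ℓ m s i).card ↔ (i : ℕ) < s := by
    rw [card_truncatedLabels hℓk.le]
    split_ifs <;> omega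
  simp_rw [hlt]
  rw [Fin.card_filter_val_lt, min_eq_right hsm]

theorem dens_piFinset_truncatedLabels (hℓ : 0 < ℓ) (hℓk : ℓ < k) (hsm : s ≤ m) :
    dens (piFinset (truncatedLabels k ℓ m s)) ℓ = (s : ℝ) * (1 - (ℓ : ℝ) / (k : ℝ)) := by
  have hterm (i : Fin m) :
      (((truncatedLabels k ℓ m s i).card - ℓ : ℕ) : ℝ) / (truncatedLabels k ℓ m s i).card =
        if (i : ℕ) < s then 1 - (ℓ : ℝ) / k else 0 := by
    have hk : (k : ℝ) ≠ 0 := by norm_cast; omega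
    rw [card_truncatedLabels hℓk.le]
    split_ifs <;> first | omega | simp [Nat.cast_sub hℓk.le, sub_div, hk]
  have hne (i : Fin m) : (truncatedLabels k ℓ m s i).Nonempty := by
    rw [← card_pos, card_truncatedLabels hℓk.le]
    split_ifs <;> omega
  rw [dens_piFinset hne, Finset.sum_congr rfl fun i _ => hterm i, sum_ite, sum_const_zero,
    add_zero, sum_const, Fin.card_filter_val_lt, min_eq_right hsm, nsmul_eq_mul]

end TruncatedLabels

/-- Optimality of the constant. For `k > ℓ ≥ 1` and `m ≥ s ≥ 0`, the
class `H = [k]^s × [ℓ]^{m−s} ⊆ [k]^m` satisfies `d^ℓ_DS(H) = s` and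
`dens^ℓ(H) = s(1 − ℓ/k)`; hence the bound `dens^ℓ(W) ≤ d^ℓ_DS(W)` is tight including
the constant as `k → ∞`. -/
theorem dens_DSdim_tight (k ℓ m s : ℕ) (hℓ : 1 ≤ ℓ) (hℓk : ℓ < k) (hsm : s ≤ m) :
    DSDimEq (↑(Finset.univ.filter fun w : Fin m → Fin k =>
        ∀ i : Fin m, s ≤ (i : ℕ) → (w i : ℕ) < ℓ) : Set (Fin m → Fin k)) ℓ s ∧
    dens (Finset.univ.filter fun w : Fin m → Fin k =>
        ∀ i : Fin m, s ≤ (i : ℕ) → (w i : ℕ) < ℓ) ℓ = (s : ℝ) * (1 - (ℓ : ℝ) / (k : ℝ)) := by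
  rw [filter_eq_piFinset_truncatedLabels]
  refine ⟨⟨⟨Fin.castLE hsm, dsShatters_castLE_piFinset_truncatedLabels hℓ hℓk hsm⟩, fun d ⟨S, hS⟩ => ?_⟩,
    dens_piFinset_truncatedLabels hℓ hℓk hsm⟩
  simpa only [card_filter_lt_card_truncatedLabels hℓk hsm] using hS.card_le_piFinset hℓ
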